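/- Let M be the double star block matrix with xᵀy ≠ 0, zᵀw = 0, a, b ≠ 0, ζ := xᵀy + ab ≠ 0, and suppose q := aā + x*x ≠ 0 and α := ζζ̄ + aā·z*z ≠ 0. Then X = [[0, ζ̄α⁻¹xᵀ, ζ̄α⁻¹a, 0],[q⁻¹x̄, 0, 0, (qζ)⁻¹ax̄zᵀ],[āq⁻¹, 0, 0, (qζ)⁻¹aāzᵀ],[0, āα⁻¹z̄xᵀ, aāα⁻¹z̄, 0]] is the dual core EP inverse of M: M⁴X = M³, X²M = X, and (XM)* = XM. -/

import Mathlib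

open Matrix BigOperators

noncomputable section

abbrev Idx (m n : ℕ) := (Unit ⊕ Fin m) ⊕ (Unit ⊕ Fin n)

/-- 4×4 block builder for matrices indexed by a double star digraph vertex set:
the blocks correspond to the first center, the first star's leaves, the second
center and the second star's leaves, in this order. -/
def blk {m n : ℕ}
    (A11 : ℂ) (A12 : Fin m → ℂ) (A13 : ℂ) (A14 : Fin n → ℂ)
    (A21 : Fin m → ℂ) (A22 : Fin m → Fin m → ℂ) (A23 : Fin m → ℂ) (A24 : Fin m → Fin n → ℂ)
    (A31 : ℂ) (A32 : Fin m → ℂ) (A33 : ℂ) (A34 : Fin n → ℂ)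
    (A41 : Fin n → ℂ) (A42 : Fin n → Fin m → ℂ) (A43 : Fin n → ℂ) (A44 : Fin n → Fin n → ℂ) :
    Matrix (Idx m n) (Idx m n) ℂ :=
  Matrix.of fun i j =>
    match i, j with
    | .inl (.inl _), .inl (.inl _) => A11
    | .inl (.inl _), .inl (.inr k) => A12 k
    | .inl (.inl _), .inr (.inl _) => A13
    | .inl (.inl _), .inr (.inr k) => A14 k
    | .inl (.inr i'), .inl (.inl _) => A21 i'
    | .inl (.inr i'), .inl (.inr k) => A22 i' k
    | .inl (.inr i'), .inr (.inl _) => A23 i'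
    | .inl (.inr i'), .inr (.inr k) => A24 i' k
    | .inr (.inl _), .inl (.inl _) => A31
    | .inr (.inl _), .inl (.inr k) => A32 k
    | .inr (.inl _), .inr (.inl _) => A33
    | .inr (.inl _), .inr (.inr k) => A34 k
    | .inr (.inr i'), .inl (.inl _) => A41 i'
    | .inr (.inr i'), .inl (.inr k) => A42 i' k
    | .inr (.inr i'), .inr (.inl _) => A43 i'
    | .inr (.inr i'), .inr (.inr k) => A44 i' k

/-- The canonical matrix `[[0, xᵀ, a, 0],[y, 0, 0, 0],[b, 0, 0, zᵀ],[0, 0, w, 0]]`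
associated with a double star digraph. -/
def dsM {m n : ℕ} (a b : ℂ) (x y : Fin m → ℂ) (z w : Fin n → ℂ) :
    Matrix (Idx m n) (Idx m n) ℂ :=
  blk 0 x a (fun _ => 0)
      y (fun _ _ => 0) (fun _ => 0) (fun _ _ => 0)
      b (fun _ => 0) 0 z
      (fun _ => 0) (fun _ _ => 0) w (fun _ _ => 0)

/-- `xᵀy`. -/
def dotT {k : ℕ} (x y : Fin k → ℂ) : ℂ := ∑ i, x i * y i

/-- `x*x = ∑ conj xᵢ · xᵢ`. -/
def gram {k : ℕ} (x : Fin k → ℂ) : ℂ := ∑ i, star (x i) * x i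

end

/-!
In the 4×4 block form over the two centres and the two leaf sets, every block of a product of
`M`, the candidate `X` and `P = X * M` is a combination of `x, y, z, w`, their conjugates and
rank-one matrices, whose coefficients involve the vectors only through `xᵀy`, `zᵀw`, `x*x` and
`z*z`. Once `zᵀw = 0`, the powers `M³, M⁴` have explicit blocks in terms of `ζ = xᵀy + ab`; the
product `X * M` is the visibly Hermitian `P`, and `M⁴ X = M³` and `X P = X` (hence `X² M = X`)
hold block by block because of the relations `q = aā + x*x` and `α = ζζ̄ + aā z*z`.
-/

theorem star_dotProduct_star_self {ι R : Type*} [Fintype ι] [NonUnitalSemiring R] [StarRing R]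
    (v : ι → R) : star (star v ⬝ᵥ v) = star v ⬝ᵥ v := by
  rw [← star_dotProduct_star, star_star]

section BlockAlgebra

variable {m n : ℕ}

/-- `blk` with its leaf-by-leaf blocks typed as matrices, so that products of blocks are matrix
products rather than pointwise ones. -/
def blkM (A11 : ℂ) (A12 : Fin m → ℂ) (A13 : ℂ) (A14 : Fin n → ℂ)
    (A21 : Fin m → ℂ) (A22 : Matrix (Fin m) (Fin m) ℂ) (A23 : Fin m → ℂ)
    (A24 : Matrix (Fin m) (Fin n) ℂ)
    (A31 : ℂ) (A32 : Fin m → ℂ) (A33 : ℂ) (A34 : Fin n → ℂ)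
    (A41 : Fin n → ℂ) (A42 : Matrix (Fin n) (Fin m) ℂ) (A43 : Fin n → ℂ)
    (A44 : Matrix (Fin n) (Fin n) ℂ) : Matrix (Idx m n) (Idx m n) ℂ :=
  blk A11 A12 A13 A14 A21 A22 A23 A24 A31 A32 A33 A34 A41 A42 A43 A44

theorem blkM_mul
    (A11 : ℂ) (A12 : Fin m → ℂ) (A13 : ℂ) (A14 : Fin n → ℂ)
    (A21 : Fin m → ℂ) (A22 : Matrix (Fin m) (Fin m) ℂ) (A23 : Fin m → ℂ)
    (A24 : Matrix (Fin m) (Fin n) ℂ)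
    (A31 : ℂ) (A32 : Fin m → ℂ) (A33 : ℂ) (A34 : Fin n → ℂ)
    (A41 : Fin n → ℂ) (A42 : Matrix (Fin n) (Fin m) ℂ) (A43 : Fin n → ℂ)
    (A44 : Matrix (Fin n) (Fin n) ℂ)
    (B11 : ℂ) (B12 : Fin m → ℂ) (B13 : ℂ) (B14 : Fin n → ℂ)
    (B21 : Fin m → ℂ) (B22 : Matrix (Fin m) (Fin m) ℂ) (B23 : Fin m → ℂ)
    (B24 : Matrix (Fin m) (Fin n) ℂ)
    (B31 : ℂ) (B32 : Fin m → ℂ) (B33 : ℂ) (B34 : Fin n → ℂ)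
    (B41 : Fin n → ℂ) (B42 : Matrix (Fin n) (Fin m) ℂ) (B43 : Fin n → ℂ)
    (B44 : Matrix (Fin n) (Fin n) ℂ) :
    blkM A11 A12 A13 A14 A21 A22 A23 A24 A31 A32 A33 A34 A41 A42 A43 A44 *
      blkM B11 B12 B13 B14 B21 B22 B23 B24 B31 B32 B33 B34 B41 B42 B43 B44 =
    blkM (A11 * B11 + A12 ⬝ᵥ B21 + A13 * B31 + A14 ⬝ᵥ B41)
      (A11 • B12 + A12 ᵥ* B22 + A13 • B32 + A14 ᵥ* B42)
      (A11 * B13 + A12 ⬝ᵥ B23 + A13 * B33 + A14 ⬝ᵥ B43)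
      (A11 • B14 + A12 ᵥ* B24 + A13 • B34 + A14 ᵥ* B44)
      (B11 • A21 + A22 *ᵥ B21 + B31 • A23 + A24 *ᵥ B41)
      (vecMulVec A21 B12 + A22 * B22 + vecMulVec A23 B32 + A24 * B42)
      (B13 • A21 + A22 *ᵥ B23 + B33 • A23 + A24 *ᵥ B43)
      (vecMulVec A21 B14 + A22 * B24 + vecMulVec A23 B34 + A24 * B44)
      (A31 * B11 + A32 ⬝ᵥ B21 + A33 * B31 + A34 ⬝ᵥ B41)
      (A31 • B12 + A32 ᵥ* B22 + A33 • B32 + A34 ᵥ* B42)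
      (A31 * B13 + A32 ⬝ᵥ B23 + A33 * B33 + A34 ⬝ᵥ B43)
      (A31 • B14 + A32 ᵥ* B24 + A33 • B34 + A34 ᵥ* B44)
      (B11 • A41 + A42 *ᵥ B21 + B31 • A43 + A44 *ᵥ B41)
      (vecMulVec A41 B12 + A42 * B22 + vecMulVec A43 B32 + A44 * B42)
      (B13 • A41 + A42 *ᵥ B23 + B33 • A43 + A44 *ᵥ B43)
      (vecMulVec A41 B14 + A42 * B24 + vecMulVec A43 B34 + A44 * B44) := by
  ext (((_ | i) | (_ | i))) (((_ | j) | (_ | j))) <;>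
    simp only [blkM, mul_apply, Fintype.sum_sum_type, Finset.univ_unique,
      Finset.sum_singleton] <;>
    simp [blk, mul_apply, dotProduct, vecMul, mulVec, vecMulVec, mul_comm, add_assoc]

theorem blkM_conjTranspose
    (A11 : ℂ) (A12 : Fin m → ℂ) (A13 : ℂ) (A14 : Fin n → ℂ)
    (A21 : Fin m → ℂ) (A22 : Matrix (Fin m) (Fin m) ℂ) (A23 : Fin m → ℂ)
    (A24 : Matrix (Fin m) (Fin n) ℂ)
    (A31 : ℂ) (A32 : Fin m → ℂ) (A33 : ℂ) (A34 : Fin n → ℂ)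
    (A41 : Fin n → ℂ) (A42 : Matrix (Fin n) (Fin m) ℂ) (A43 : Fin n → ℂ)
    (A44 : Matrix (Fin n) (Fin n) ℂ) :
    (blkM A11 A12 A13 A14 A21 A22 A23 A24 A31 A32 A33 A34 A41 A42 A43 A44)ᴴ =
      blkM (star A11) (star A21) (star A31) (star A41) (star A12) A22ᴴ (star A32) A42ᴴ
        (star A13) (star A23) (star A33) (star A43) (star A14) A24ᴴ (star A34) A44ᴴ := by
  ext (((_ | i) | (_ | i))) (((_ | j) | (_ | j))) <;> rfl

end BlockAlgebra

section Powers

variable {m n : ℕ} {a b ζ : ℂ} {x y : Fin m → ℂ} {z w : Fin n → ℂ}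

variable (a b x y z w) in
theorem dsM_eq_blkM : dsM a b x y z w = blkM 0 x a 0 y 0 0 0 b 0 0 z 0 0 w 0 := rfl

theorem dsM_sq (hζ : x ⬝ᵥ y + a * b = ζ) (hzw : z ⬝ᵥ w = 0) :
    dsM a b x y z w ^ 2 =
      blkM ζ 0 0 (a • z) 0 (vecMulVec y x) (a • y) 0
        0 (b • x) (b * a) 0 (b • w) 0 0 (vecMulVec w z) := by
  rw [sq, dsM_eq_blkM, blkM_mul, ← hζ]
  ext (((_ | i) | (_ | i))) (((_ | j) | (_ | j))) <;>
    simp only [blkM, blk, of_apply, hzw, zero_mul, mul_zero, add_zero, zero_add, smul_zero,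
      zero_smul, dotProduct_zero, zero_dotProduct, vecMul_zero, mulVec_zero, zero_mulVec,
      Matrix.mul_zero, Pi.add_apply, Pi.smul_apply, smul_eq_mul, Matrix.add_apply,
      vecMulVec_apply, Pi.zero_apply, Matrix.zero_apply]

theorem dsM_pow_three (hζ : x ⬝ᵥ y + a * b = ζ) (hzw : z ⬝ᵥ w = 0) :
    dsM a b x y z w ^ 3 =
      blkM 0 (ζ • x) (ζ * a) 0 (ζ • y) 0 0 (a • vecMulVec y z)
        (b * ζ) 0 0 ((a * b) • z) 0 (b • vecMulVec w x) ((a * b) • w) 0 := by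
  rw [pow_succ, dsM_sq hζ hzw, dsM_eq_blkM, blkM_mul]
  ext (((_ | i) | (_ | i))) (((_ | j) | (_ | j))) <;>
    simp only [blkM, blk, of_apply, hzw, eq_sub_of_add_eq hζ, smul_dotProduct,
      vecMulVec_mulVec, op_smul_eq_smul, zero_mul, mul_zero, add_zero, zero_add, smul_zero,
      zero_smul, dotProduct_zero, zero_dotProduct, vecMul_zero, mulVec_zero, zero_mulVec,
      Matrix.mul_zero, Pi.add_apply, Pi.smul_apply, smul_eq_mul, Matrix.add_apply,
      Matrix.smul_apply, vecMulVec_apply, Pi.zero_apply, Matrix.zero_apply] <;>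
    ring

theorem dsM_pow_four (hζ : x ⬝ᵥ y + a * b = ζ) (hzw : z ⬝ᵥ w = 0) :
    dsM a b x y z w ^ 4 =
      blkM (ζ * ζ) 0 0 ((ζ * a) • z) 0 (ζ • vecMulVec y x) ((ζ * a) • y) 0
        0 ((b * ζ) • x) (a * b * ζ) 0 ((b * ζ) • w) 0 0 ((a * b) • vecMulVec w z) := by
  rw [pow_succ, dsM_pow_three hζ hzw, dsM_eq_blkM, blkM_mul]
  ext (((_ | i) | (_ | i))) (((_ | j) | (_ | j))) <;>
    simp only [blkM, blk, of_apply, hzw, eq_sub_of_add_eq hζ, smul_dotProduct, smul_mulVec,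
      vecMulVec_mulVec, op_smul_eq_smul, zero_mul, mul_zero, add_zero, zero_add, smul_zero,
      zero_smul, dotProduct_zero, zero_dotProduct, vecMul_zero, mulVec_zero, zero_mulVec,
      Matrix.mul_zero, Pi.add_apply, Pi.smul_apply, smul_eq_mul, Matrix.add_apply,
      Matrix.smul_apply, vecMulVec_apply, Pi.zero_apply, Matrix.zero_apply] <;>
    ring

end Powers

section DualCoreEP

variable {m n : ℕ}

noncomputable def dsDualCoreEP (a ζ q α : ℂ) (x : Fin m → ℂ) (z : Fin n → ℂ) :
    Matrix (Idx m n) (Idx m n) ℂ :=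
  blkM 0 ((star ζ * α⁻¹) • x) (star ζ * α⁻¹ * a) 0
    (q⁻¹ • star x) 0 0 (((q * ζ)⁻¹ * a) • vecMulVec (star x) z)
    (star a * q⁻¹) 0 0 (((q * ζ)⁻¹ * a * star a) • z)
    0 ((star a * α⁻¹) • vecMulVec (star z) x) ((a * star a * α⁻¹) • star z) 0

noncomputable def dsDualCoreEPProj (a ζ q α : ℂ) (x : Fin m → ℂ) (z : Fin n → ℂ) :
    Matrix (Idx m n) (Idx m n) ℂ :=
  blkM (ζ * star ζ * α⁻¹) 0 0 ((star ζ * α⁻¹ * a) • z)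
    0 (q⁻¹ • vecMulVec (star x) x) ((q⁻¹ * a) • star x) 0
    0 ((star a * q⁻¹) • x) (a * star a * q⁻¹) 0
    ((star a * ζ * α⁻¹) • star z) 0 0 ((a * star a * α⁻¹) • vecMulVec (star z) z)

theorem blk_eq_dsDualCoreEP (a ζ q α : ℂ) (x : Fin m → ℂ) (z : Fin n → ℂ) :
    blk 0 (fun j => star ζ * α⁻¹ * x j) (star ζ * α⁻¹ * a) (fun _ => 0)
        (fun i => q⁻¹ * star (x i)) (fun _ _ => 0) (fun _ => 0)
          (fun i j => (q * ζ)⁻¹ * a * star (x i) * z j)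
        (star a * q⁻¹) (fun _ => 0) 0 (fun j => (q * ζ)⁻¹ * a * star a * z j)
        (fun _ => 0) (fun i j => star a * α⁻¹ * star (z i) * x j)
          (fun i => a * star a * α⁻¹ * star (z i)) (fun _ _ => 0) =
      dsDualCoreEP a ζ q α x z := by
  ext (((_ | i) | (_ | i))) (((_ | j) | (_ | j))) <;>
    simp only [dsDualCoreEP, blkM, blk, of_apply, Pi.smul_apply, smul_eq_mul,
      Matrix.smul_apply, vecMulVec_apply, Pi.zero_apply, Matrix.zero_apply, Pi.star_apply] <;>
    ring

variable {a b ζ q α : ℂ} {x y : Fin m → ℂ} {z w : Fin n → ℂ}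

theorem dsDualCoreEP_mul_dsM (hζ : x ⬝ᵥ y + a * b = ζ) (hzw : z ⬝ᵥ w = 0) :
    dsDualCoreEP a ζ q α x z * dsM a b x y z w = dsDualCoreEPProj a ζ q α x z := by
  rw [dsDualCoreEP, dsM_eq_blkM, blkM_mul]
  ext (((_ | i) | (_ | i))) (((_ | j) | (_ | j))) <;>
    simp only [blkM, blk, dsDualCoreEPProj, of_apply, hzw, eq_sub_of_add_eq hζ,
      smul_dotProduct, smul_mulVec, vecMulVec_mulVec, op_smul_eq_smul, zero_mul, mul_zero,
      add_zero, zero_add, smul_zero, zero_smul, dotProduct_zero, zero_dotProduct, vecMul_zero,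
      mulVec_zero, zero_mulVec, Matrix.mul_zero, Pi.add_apply, Pi.smul_apply, smul_eq_mul,
      Matrix.add_apply, Matrix.smul_apply, vecMulVec_apply, Pi.zero_apply, Matrix.zero_apply,
      Pi.star_apply] <;>
    ring

theorem dsDualCoreEPProj_conjTranspose
    (hq : q = a * star a + star x ⬝ᵥ x) (hα : α = ζ * star ζ + a * star a * (star z ⬝ᵥ z)) :
    (dsDualCoreEPProj a ζ q α x z)ᴴ = dsDualCoreEPProj a ζ q α x z := by
  have hq_star : star q = q := by
    subst hq; simp only [star_add, star_mul', star_star, star_dotProduct_star_self]; ring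
  have hα_star : star α = α := by
    subst hα; simp only [star_add, star_mul', star_star, star_dotProduct_star_self]; ring
  rw [dsDualCoreEPProj, blkM_conjTranspose]
  ext (((_ | i) | (_ | i))) (((_ | j) | (_ | j))) <;>
    simp only [blkM, blk, of_apply, conjTranspose_smul, conjTranspose_vecMulVec,
      conjTranspose_zero, star_mul', star_inv₀, star_star, hq_star, hα_star, star_zero,
      Pi.smul_apply, smul_eq_mul, Matrix.smul_apply, vecMulVec_apply, Pi.zero_apply,
      Matrix.zero_apply, Pi.star_apply] <;>
    ring

-- Substituting `q` and `α` only after `field_simp` keeps the denominators atomic.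
theorem dsDualCoreEP_mul_dsDualCoreEPProj
    (hq : q = a * star a + star x ⬝ᵥ x) (hα : α = ζ * star ζ + a * star a * (star z ⬝ᵥ z))
    (hζ0 : ζ ≠ 0) (hq0 : q ≠ 0) (hα0 : α ≠ 0) :
    dsDualCoreEP a ζ q α x z * dsDualCoreEPProj a ζ q α x z = dsDualCoreEP a ζ q α x z := by
  rw [dsDualCoreEP, dsDualCoreEPProj, blkM_mul]
  ext (((_ | i) | (_ | i))) (((_ | j) | (_ | j))) <;>
    simp only [blkM, blk, of_apply, smul_dotProduct, dotProduct_smul, vecMul_smul, smul_mulVec,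
      mulVec_smul, vecMul_vecMulVec, vecMulVec_mulVec, op_smul_eq_smul, vecMulVec_mul_vecMulVec,
      Matrix.smul_mul, Matrix.mul_smul, dotProduct_comm x (star x), dotProduct_comm z (star z),
      zero_mul, mul_zero, add_zero, zero_add, smul_zero, zero_smul, dotProduct_zero,
      zero_dotProduct, vecMul_zero, mulVec_zero, zero_mulVec, Matrix.mul_zero, Pi.add_apply,
      Pi.smul_apply, smul_eq_mul, Matrix.add_apply, Matrix.smul_apply, vecMulVec_apply,
      Pi.zero_apply, Matrix.zero_apply, Pi.star_apply] <;>
    field_simp <;> subst hq hα <;> ring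

theorem dsM_pow_four_mul_dsDualCoreEP (hζ : x ⬝ᵥ y + a * b = ζ) (hzw : z ⬝ᵥ w = 0)
    (hq : q = a * star a + star x ⬝ᵥ x) (hα : α = ζ * star ζ + a * star a * (star z ⬝ᵥ z))
    (hζ0 : ζ ≠ 0) (hq0 : q ≠ 0) (hα0 : α ≠ 0) :
    dsM a b x y z w ^ 4 * dsDualCoreEP a ζ q α x z = dsM a b x y z w ^ 3 := by
  rw [dsM_pow_four hζ hzw, dsM_pow_three hζ hzw, dsDualCoreEP, blkM_mul]
  ext (((_ | i) | (_ | i))) (((_ | j) | (_ | j))) <;>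
    simp only [blkM, blk, of_apply, smul_dotProduct, dotProduct_smul, vecMul_smul, smul_mulVec,
      mulVec_smul, vecMul_vecMulVec, vecMulVec_mulVec, op_smul_eq_smul, vecMulVec_mul_vecMulVec,
      Matrix.smul_mul, Matrix.mul_smul, dotProduct_comm x (star x), dotProduct_comm z (star z),
      zero_mul, mul_zero, add_zero, zero_add, smul_zero, zero_smul, dotProduct_zero,
      zero_dotProduct, vecMul_zero, mulVec_zero, zero_mulVec, Matrix.mul_zero, Matrix.zero_mul,
      Pi.add_apply, Pi.smul_apply, smul_eq_mul, Matrix.add_apply, Matrix.smul_apply,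
      vecMulVec_apply, Pi.zero_apply, Matrix.zero_apply] <;>
    field_simp <;> subst hq hα <;> ring

end DualCoreEP

theorem dsM_dualCoreEP_caseII_general {m n : ℕ} (a b : ℂ)
    (x y : Fin m → ℂ) (z w : Fin n → ℂ)
    (hzw : dotT z w = 0)
    (hζ : dotT x y + a * b ≠ 0)
    (hq : a * star a + gram x ≠ 0)
    (hα : (dotT x y + a * b) * star (dotT x y + a * b) + a * star a * gram z ≠ 0) :
    letI ζ := dotT x y + a * b
    letI M := dsM a b x y z w
    letI q := a * star a + gram x
    letI α := ζ * star ζ + a * star a * gram z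
    letI X := blk 0 (fun j => star ζ * α⁻¹ * x j) (star ζ * α⁻¹ * a) (fun _ => 0)
        (fun i => q⁻¹ * star (x i)) (fun _ _ => 0) (fun _ => 0)
          (fun i j => (q * ζ)⁻¹ * a * star (x i) * z j)
        (star a * q⁻¹) (fun _ => 0) 0 (fun j => (q * ζ)⁻¹ * a * star a * z j)
        (fun _ => 0) (fun i j => star a * α⁻¹ * star (z i) * x j)
          (fun i => a * star a * α⁻¹ * star (z i)) (fun _ _ => 0)
    M ^ 4 * X = M ^ 3 ∧ X ^ 2 * M = X ∧ (X * M)ᴴ = X * M := by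
  set ζ := dotT x y + a * b with hζ_def
  set q := a * star a + gram x with hq_def
  set α := ζ * star ζ + a * star a * gram z with hα_def
  have hζ' : x ⬝ᵥ y + a * b = ζ := hζ_def.symm
  have hq' : q = a * star a + star x ⬝ᵥ x := hq_def
  have hα' : α = ζ * star ζ + a * star a * (star z ⬝ᵥ z) := hα_def
  have hXM := dsDualCoreEP_mul_dsM (q := q) (α := α) hζ' hzw
  rw [blk_eq_dsDualCoreEP]
  refine ⟨dsM_pow_four_mul_dsDualCoreEP hζ' hzw hq' hα' hζ hq hα, ?_, ?_⟩
  · rw [sq, mul_assoc, hXM, dsDualCoreEP_mul_dsDualCoreEPProj hq' hα' hζ hq hα]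
  · rw [hXM, dsDualCoreEPProj_conjTranspose hq' hα']

theorem dsM_dualCoreEP_caseII {m n : ℕ} (a b : ℂ) (ha : a ≠ 0) (hb : b ≠ 0)
    (x y : Fin m → ℂ) (z w : Fin n → ℂ)
    (hxy : dotT x y ≠ 0) (hzw : dotT z w = 0)
    (hζ : dotT x y + a * b ≠ 0)
    (hq : a * star a + gram x ≠ 0)
    (hα : (dotT x y + a * b) * star (dotT x y + a * b) + a * star a * gram z ≠ 0) :
    letI ζ := dotT x y + a * b
    letI M := dsM a b x y z w
    letI q := a * star a + gram x
    letI α := ζ * star ζ + a * star a * gram z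
    letI X := blk 0 (fun j => star ζ * α⁻¹ * x j) (star ζ * α⁻¹ * a) (fun _ => 0)
        (fun i => q⁻¹ * star (x i)) (fun _ _ => 0) (fun _ => 0)
          (fun i j => (q * ζ)⁻¹ * a * star (x i) * z j)
        (star a * q⁻¹) (fun _ => 0) 0 (fun j => (q * ζ)⁻¹ * a * star a * z j)
        (fun _ => 0) (fun i j => star a * α⁻¹ * star (z i) * x j)
          (fun i => a * star a * α⁻¹ * star (z i)) (fun _ _ => 0)
    M ^ 4 * X = M ^ 3 ∧ X ^ 2 * M = X ∧ (X * M)ᴴ = X * M :=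
  dsM_dualCoreEP_caseII_general a b x y z w hzw hζ hq hα
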